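/- If the pair of real-valued random variables (U,V) can be noninteractively simulated from an infinite number of samples of the pair of real-valued random variables (X,Y), then the Hirschfeld–Gebelein–Rényi maximal correlations satisfy ρ_M(X,Y) ≥ ρ_M(U,V). -/

import Mathlib

/-!
Say that `ρ` bounds the correlation of `(X, Y)` under `P` (`MaxCorrLE P X Y ρ`) if
`cov(F X, G Y) ≤ ρ σ(F X) σ(G Y)` for all square-integrable `F X`, `G Y`. Then `maxCorr μ` bounds
the correlation of the coordinates under `μ`, and every bound `ρ ≥ 0` dominates `maxCorr μ`.

Such bounds survive post-processing and tensorize: by the laws of total covariance and total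
variance over a product, factor bounds `ρ₁`, `ρ₂` give the bound `max ρ₁ ρ₂` (Witsenhausen).
Hence `maxCorr μ` bounds every simulated law, the private randomness `(W, Z)` contributing the
bound `0`. Finally, bounds pass to total-variation limits: for bounded test functions all moments
converge, and square-integrable ones are reached by truncation.
-/

open MeasureTheory

/-- Hirschfeld–Gebelein–Rényi maximal correlation of a joint law `μ` on `ℝ × ℝ`
(the value `0` is included to cover the degenerate case where no admissible `φ, ψ` exist). -/
noncomputable def maxCorr (μ : Measure (ℝ × ℝ)) : ℝ :=
  sSup ({0} ∪ { r | ∃ φ ψ : ℝ → ℝ, Measurable φ ∧ Measurable ψ ∧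
    (∫ p, φ p.1 ∂μ) = 0 ∧ (∫ p, (φ p.1) ^ 2 ∂μ) = 1 ∧
    (∫ p, ψ p.2 ∂μ) = 0 ∧ (∫ p, (ψ p.2) ^ 2 ∂μ) = 1 ∧
    r = ∫ p, φ p.1 * ψ p.2 ∂μ })

/-- Total variation distance between two laws on `ℝ²`. -/
noncomputable def dTV (μ ν : Measure (ℝ × ℝ)) : ℝ :=
  ⨆ D : { D : Set (ℝ × ℝ) // MeasurableSet D }, |(μ D.1).toReal - (ν D.1).toReal|

/-- The uniform probability measure on `Fin m`. -/
noncomputable def unif (m : ℕ) : Measure (Fin m) := ((m : ENNReal))⁻¹ • Measure.count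

/-- The joint law of `(f(X₁,…,X_k,W), g(Y₁,…,Y_k,Z))`, where `(X₁,Y₁),…,(X_k,Y_k)` are
i.i.d. with law `μ` and `W, Z` are uniform on `{1,…,m}`, independent of each other and of
the samples. -/
noncomputable def simLaw (μ : Measure (ℝ × ℝ)) (k m : ℕ)
    (f g : (Fin k → ℝ) × Fin m → ℝ) : Measure (ℝ × ℝ) :=
  Measure.map
    (fun ω : (Fin k → ℝ × ℝ) × (Fin m × Fin m) =>
      (f (fun i => (ω.1 i).1, ω.2.1), g (fun i => (ω.1 i).2, ω.2.2)))
    ((Measure.pi fun _ : Fin k => μ).prod ((unif m).prod (unif m)))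

/-- `(U,V)` (with joint law `ν`) can be noninteractively simulated from an infinite number
of samples of `(X,Y)` (with joint law `μ`). -/
def CanSimulate (μ ν : Measure (ℝ × ℝ)) : Prop :=
  ∃ (k mm : ℕ → ℕ) (f g : ∀ n : ℕ, (Fin (k n) → ℝ) × Fin (mm n) → ℝ),
    (∀ n, 0 < k n ∧ 0 < mm n ∧ Measurable (f n) ∧ Measurable (g n)) ∧
    Filter.Tendsto (fun n => dTV ν (simLaw μ (k n) (mm n) (f n) (g n)))
      Filter.atTop (nhds 0)

open ProbabilityTheory Filter Topology

section SecondMoments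
variable {Ω : Type*} [MeasurableSpace Ω] {P : Measure Ω}

lemma integral_mul_le_sqrt_mul_sqrt {f g : Ω → ℝ} (hf : MemLp f 2 P) (hg : MemLp g 2 P) :
    ∫ ω, f ω * g ω ∂P ≤ √(∫ ω, f ω ^ 2 ∂P) * √(∫ ω, g ω ^ 2 ∂P) := by
  have hHolder := integral_mul_norm_le_Lp_mul_Lq (μ := P) Real.HolderConjugate.two_two
    (by simpa using hf) (by simpa using hg)
  simp only [Real.norm_eq_abs, Real.rpow_two, sq_abs, ← Real.sqrt_eq_rpow] at hHolder
  have hfg : Integrable (fun ω => f ω * g ω) P := hf.integrable_mul hg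
  refine le_trans (integral_mono hfg ?_ fun ω => ?_) hHolder
  · simpa only [abs_mul] using hfg.abs
  · simpa only [abs_mul] using le_abs_self (f ω * g ω)

lemma covariance_le_sqrt_variance_mul_sqrt_variance [IsFiniteMeasure P] {X Y : Ω → ℝ}
    (hX : MemLp X 2 P) (hY : MemLp Y 2 P) :
    cov[X, Y; P] ≤ √Var[X; P] * √Var[Y; P] := by
  rw [covariance, variance_eq_integral hX.aemeasurable, variance_eq_integral hY.aemeasurable]
  exact integral_mul_le_sqrt_mul_sqrt (hX.sub (memLp_const _)) (hY.sub (memLp_const _))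

lemma sq_integral_le_integral_sq [IsProbabilityMeasure P] {X : Ω → ℝ} (hX : MemLp X 2 P) :
    (∫ ω, X ω ∂P) ^ 2 ≤ ∫ ω, X ω ^ 2 ∂P := by
  have h := variance_nonneg X P
  rw [variance_eq_sub hX] at h
  simpa using h

lemma memLp_two_sqrt {u : Ω → ℝ} (hu : Integrable u P) (hu0 : 0 ≤ u) :
    MemLp (fun ω => √(u ω)) 2 P := by
  rw [memLp_two_iff_integrable_sq (Real.continuous_sqrt.comp_aestronglyMeasurable hu.1)]
  simpa [Real.sq_sqrt (hu0 _)] using hu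

lemma integral_sqrt_mul_sqrt_le {u v : Ω → ℝ} (hu : Integrable u P) (hv : Integrable v P)
    (hu0 : 0 ≤ u) (hv0 : 0 ≤ v) :
    ∫ ω, √(u ω) * √(v ω) ∂P ≤ √(∫ ω, u ω ∂P) * √(∫ ω, v ω ∂P) := by
  simpa [Real.sq_sqrt (hu0 _), Real.sq_sqrt (hv0 _)] using
    integral_mul_le_sqrt_mul_sqrt (memLp_two_sqrt hu hu0) (memLp_two_sqrt hv hv0)

lemma integral_sub_integral_div [IsProbabilityMeasure P] {X : Ω → ℝ} (hX : Integrable X P)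
    (c : ℝ) : ∫ ω, (X ω - ∫ ω', X ω' ∂P) / c ∂P = 0 := by
  simp [integral_div, integral_sub hX]

lemma integral_sq_sub_integral_div_sqrt_variance {X : Ω → ℝ} (hX : AEMeasurable X P)
    (hσ : √Var[X; P] ≠ 0) : ∫ ω, ((X ω - ∫ ω', X ω' ∂P) / √Var[X; P]) ^ 2 ∂P = 1 := by
  simp only [div_pow, integral_div]
  rw [Real.sq_sqrt (variance_nonneg X P), ← variance_eq_integral hX, div_self]
  exact fun h => hσ (by rw [h, Real.sqrt_zero])

lemma memLp_two_of_integral_sq_ne_zero {φ : Ω → ℝ} (hφ : Measurable φ)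
    (h : ∫ ω, φ ω ^ 2 ∂P ≠ 0) : MemLp φ 2 P :=
  (memLp_two_iff_integrable_sq hφ.aestronglyMeasurable).mpr (Integrable.of_integral_ne_zero h)

end SecondMoments

lemma mul_sqrt_add_mul_sqrt_le {ρ₁ ρ₂ a b c d : ℝ} (hρ₁ : 0 ≤ ρ₁) (ha : 0 ≤ a)
    (hb : 0 ≤ b) (hc : 0 ≤ c) (hd : 0 ≤ d) :
    ρ₁ * (√a * √b) + ρ₂ * (√c * √d) ≤ max ρ₁ ρ₂ * (√(a + c) * √(b + d)) := by
  have hcs : √a * √b + √c * √d ≤ √(a + c) * √(b + d) := by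
    rw [← Real.sqrt_mul (add_nonneg ha hc), Real.le_sqrt (by positivity) (by positivity)]
    nlinarith [sq_nonneg (√a * √d - √c * √b), Real.sq_sqrt ha, Real.sq_sqrt hb,
      Real.sq_sqrt hc, Real.sq_sqrt hd]
  calc ρ₁ * (√a * √b) + ρ₂ * (√c * √d) ≤ max ρ₁ ρ₂ * (√a * √b + √c * √d) := by
        rw [mul_add]
        gcongr
        exacts [le_max_left _ _, le_max_right _ _]
    _ ≤ max ρ₁ ρ₂ * (√(a + c) * √(b + d)) := by gcongr

section TotalCovariance
variable {Ω₁ Ω₂ : Type*} [MeasurableSpace Ω₁] [MeasurableSpace Ω₂] {P₁ : Measure Ω₁}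
  {P₂ : Measure Ω₂} [IsProbabilityMeasure P₁] [IsProbabilityMeasure P₂] {f g : Ω₁ × Ω₂ → ℝ}

lemma memLp_two_slice (hf : Measurable f) (hf2 : MemLp f 2 (P₁.prod P₂)) :
    ∀ᵐ x ∂P₁, MemLp (fun y => f (x, y)) 2 P₂ := by
  rw [memLp_two_iff_integrable_sq hf.aestronglyMeasurable] at hf2
  filter_upwards [hf2.prod_right_ae] with x hx
  exact (memLp_two_iff_integrable_sq (hf.comp measurable_prodMk_left).aestronglyMeasurable).mpr hx

lemma memLp_two_integral_slice (hf : Measurable f) (hf2 : MemLp f 2 (P₁.prod P₂)) :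
    MemLp (fun x => ∫ y, f (x, y) ∂P₂) 2 P₁ := by
  have hm : AEStronglyMeasurable (fun x => ∫ y, f (x, y) ∂P₂) P₁ :=
    hf.stronglyMeasurable.integral_prod_right'.aestronglyMeasurable
  rw [memLp_two_iff_integrable_sq hm]
  have hsq := (memLp_two_iff_integrable_sq hf.aestronglyMeasurable).mp hf2
  refine hsq.integral_prod_left.mono' (hm.pow 2) ?_
  filter_upwards [memLp_two_slice hf hf2] with x hx
  rw [Real.norm_of_nonneg (sq_nonneg _)]
  exact sq_integral_le_integral_sq hx

lemma covariance_slice_ae_eq (hf : Measurable f) (hg : Measurable g)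
    (hf2 : MemLp f 2 (P₁.prod P₂)) (hg2 : MemLp g 2 (P₁.prod P₂)) :
    (fun x => cov[fun y => f (x, y), fun y => g (x, y); P₂]) =ᵐ[P₁]
      fun x => ∫ y, f (x, y) * g (x, y) ∂P₂ - (∫ y, f (x, y) ∂P₂) * ∫ y, g (x, y) ∂P₂ := by
  filter_upwards [memLp_two_slice hf hf2, memLp_two_slice hg hg2] with x hfx hgx
  simp [covariance_eq_sub hfx hgx]

lemma integrable_covariance_slice (hf : Measurable f) (hg : Measurable g)
    (hf2 : MemLp f 2 (P₁.prod P₂)) (hg2 : MemLp g 2 (P₁.prod P₂)) :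
    Integrable (fun x => cov[fun y => f (x, y), fun y => g (x, y); P₂]) P₁ :=
  (((hf2.integrable_mul hg2).integral_prod_left).sub
    ((memLp_two_integral_slice hf hf2).integrable_mul (memLp_two_integral_slice hg hg2))).congr
    (covariance_slice_ae_eq hf hg hf2 hg2).symm

lemma integrable_variance_slice (hf : Measurable f) (hf2 : MemLp f 2 (P₁.prod P₂)) :
    Integrable (fun x => Var[fun y => f (x, y); P₂]) P₁ := by
  refine (integrable_covariance_slice hf hf hf2 hf2).congr (ae_of_all _ fun x => ?_)
  exact covariance_self (hf.comp measurable_prodMk_left).aemeasurable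

lemma covariance_prod (hf : Measurable f) (hg : Measurable g)
    (hf2 : MemLp f 2 (P₁.prod P₂)) (hg2 : MemLp g 2 (P₁.prod P₂)) :
    cov[f, g; P₁.prod P₂] = ∫ x, cov[fun y => f (x, y), fun y => g (x, y); P₂] ∂P₁ +
      cov[fun x => ∫ y, f (x, y) ∂P₂, fun x => ∫ y, g (x, y) ∂P₂; P₁] := by
  have hf₁ := memLp_two_integral_slice hf hf2
  have hg₁ := memLp_two_integral_slice hg hg2
  have hfg₁ : Integrable (fun x => ∫ y, f (x, y) * g (x, y) ∂P₂) P₁ :=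
    (hf2.integrable_mul hg2).integral_prod_left
  have hf₁g₁ : Integrable (fun x => (∫ y, f (x, y) ∂P₂) * ∫ y, g (x, y) ∂P₂) P₁ :=
    hf₁.integrable_mul hg₁
  rw [covariance_eq_sub hf2 hg2, covariance_eq_sub hf₁ hg₁,
    integral_congr_ae (covariance_slice_ae_eq hf hg hf2 hg2)]
  simp only [Pi.mul_apply]
  rw [integral_sub hfg₁ hf₁g₁, integral_prod (fun z => f z * g z) (hf2.integrable_mul hg2),
    integral_prod f (hf2.integrable one_le_two), integral_prod g (hg2.integrable one_le_two)]
  ring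

lemma variance_prod (hf : Measurable f) (hf2 : MemLp f 2 (P₁.prod P₂)) :
    Var[f; P₁.prod P₂] = ∫ x, Var[fun y => f (x, y); P₂] ∂P₁ +
      Var[fun x => ∫ y, f (x, y) ∂P₂; P₁] := by
  have hslice (x : Ω₁) : cov[fun y => f (x, y), fun y => f (x, y); P₂] =
      Var[fun y => f (x, y); P₂] :=
    covariance_self (hf.comp measurable_prodMk_left).aemeasurable
  rw [← covariance_self hf.aemeasurable, covariance_prod hf hf hf2 hf2,
    covariance_self (memLp_two_integral_slice hf hf2).aemeasurable]
  simp only [hslice]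

lemma integral_covariance_slice_le (hf : Measurable f) (hg : Measurable g)
    (hf2 : MemLp f 2 (P₁.prod P₂)) (hg2 : MemLp g 2 (P₁.prod P₂)) {ρ : ℝ} (hρ : 0 ≤ ρ)
    (h : ∀ᵐ x ∂P₁, cov[fun y => f (x, y), fun y => g (x, y); P₂] ≤
      ρ * (√Var[fun y => f (x, y); P₂] * √Var[fun y => g (x, y); P₂])) :
    ∫ x, cov[fun y => f (x, y), fun y => g (x, y); P₂] ∂P₁ ≤
      ρ * (√(∫ x, Var[fun y => f (x, y); P₂] ∂P₁) * √(∫ x, Var[fun y => g (x, y); P₂] ∂P₁)) := by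
  have hVf := integrable_variance_slice hf hf2
  have hVg := integrable_variance_slice hg hg2
  have hV0 {h : Ω₁ → Ω₂ → ℝ} : 0 ≤ fun x => Var[h x; P₂] := fun _ => variance_nonneg _ _
  calc _ ≤ ∫ x, ρ * (√Var[fun y => f (x, y); P₂] * √Var[fun y => g (x, y); P₂]) ∂P₁ :=
        integral_mono_ae (integrable_covariance_slice hf hg hf2 hg2)
          (((memLp_two_sqrt hVf hV0).integrable_mul (memLp_two_sqrt hVg hV0)).const_mul ρ) h
    _ ≤ _ := by
        rw [integral_const_mul]
        gcongr
        exact integral_sqrt_mul_sqrt_le hVf hVg hV0 hV0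

end TotalCovariance

def MaxCorrLE {Ω α β : Type*} [MeasurableSpace Ω] [MeasurableSpace α] [MeasurableSpace β]
    (P : Measure Ω) (X : Ω → α) (Y : Ω → β) (ρ : ℝ) : Prop :=
  ∀ F : α → ℝ, ∀ G : β → ℝ, Measurable F → Measurable G →
    MemLp (fun ω => F (X ω)) 2 P → MemLp (fun ω => G (Y ω)) 2 P →
    cov[fun ω => F (X ω), fun ω => G (Y ω); P] ≤
      ρ * (√Var[fun ω => F (X ω); P] * √Var[fun ω => G (Y ω); P])

section MaxCorrLE
variable {Ω Ω' α β α' β' : Type*} [MeasurableSpace Ω] [MeasurableSpace Ω'] [MeasurableSpace α]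
  [MeasurableSpace β] [MeasurableSpace α'] [MeasurableSpace β'] {P : Measure Ω} {ρ : ℝ}

lemma MaxCorrLE.comp {X : Ω → α} {Y : Ω → β} (h : MaxCorrLE P X Y ρ) {u : α → α'} {v : β → β'}
    (hu : Measurable u) (hv : Measurable v) :
    MaxCorrLE P (fun ω => u (X ω)) (fun ω => v (Y ω)) ρ :=
  fun F G hF hG => h (fun a => F (u a)) (fun b => G (v b)) (hF.comp hu) (hG.comp hv)

lemma MaxCorrLE.map {Φ : Ω → Ω'} {X : Ω' → α} {Y : Ω' → β} (hΦ : Measurable Φ)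
    (hX : Measurable X) (hY : Measurable Y)
    (h : MaxCorrLE P (fun ω => X (Φ ω)) (fun ω => Y (Φ ω)) ρ) :
    MaxCorrLE (P.map Φ) X Y ρ := by
  intro F G hF hG hFX hGY
  have hFX' : AEMeasurable (fun ω => F (X ω)) (P.map Φ) := (hF.comp hX).aemeasurable
  have hGY' : AEMeasurable (fun ω => G (Y ω)) (P.map Φ) := (hG.comp hY).aemeasurable
  rw [covariance_map_fun hFX'.aestronglyMeasurable hGY'.aestronglyMeasurable hΦ.aemeasurable,
    variance_map hFX' hΦ.aemeasurable, variance_map hGY' hΦ.aemeasurable]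
  exact h F G hF hG ((memLp_map_measure_iff hFX'.aestronglyMeasurable hΦ.aemeasurable).mp hFX)
    ((memLp_map_measure_iff hGY'.aestronglyMeasurable hΦ.aemeasurable).mp hGY)

lemma maxCorrLE_prod_zero {P₁ : Measure α} {P₂ : Measure β} [IsProbabilityMeasure P₁]
    [IsProbabilityMeasure P₂] : MaxCorrLE (P₁.prod P₂) Prod.fst Prod.snd 0 := by
  intro F G hF hG hFX hGY
  rw [zero_mul]
  exact ((indepFun_prod (μ := P₁) (ν := P₂) hF hG).covariance_eq_zero hFX hGY).le
end MaxCorrLE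

lemma MaxCorrLE.prod {Ω₁ Ω₂ α₁ β₁ α₂ β₂ : Type*} [MeasurableSpace Ω₁] [MeasurableSpace Ω₂]
    [MeasurableSpace α₁] [MeasurableSpace β₁] [MeasurableSpace α₂] [MeasurableSpace β₂]
    {P₁ : Measure Ω₁} {P₂ : Measure Ω₂} [IsProbabilityMeasure P₁] [IsProbabilityMeasure P₂]
    {X₁ : Ω₁ → α₁} {Y₁ : Ω₁ → β₁} {X₂ : Ω₂ → α₂} {Y₂ : Ω₂ → β₂}
    (hX₁ : Measurable X₁) (hY₁ : Measurable Y₁) (hX₂ : Measurable X₂) (hY₂ : Measurable Y₂)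
    {ρ₁ ρ₂ : ℝ} (hρ₂ : 0 ≤ ρ₂) (h₁ : MaxCorrLE P₁ X₁ Y₁ ρ₁) (h₂ : MaxCorrLE P₂ X₂ Y₂ ρ₂) :
    MaxCorrLE (P₁.prod P₂) (fun ω => (X₁ ω.1, X₂ ω.2)) (fun ω => (Y₁ ω.1, Y₂ ω.2))
      (max ρ₁ ρ₂) := by
  intro F G hF hG hf2 hg2
  have hf : Measurable fun ω : Ω₁ × Ω₂ => F (X₁ ω.1, X₂ ω.2) := by fun_prop
  have hg : Measurable fun ω : Ω₁ × Ω₂ => G (Y₁ ω.1, Y₂ ω.2) := by fun_prop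
  have hF₁ : Measurable fun a => ∫ y, F (a, X₂ y) ∂P₂ :=
    (hF.comp (measurable_fst.prodMk (hX₂.comp measurable_snd))).stronglyMeasurable
      |>.integral_prod_right'.measurable
  have hG₁ : Measurable fun b => ∫ y, G (b, Y₂ y) ∂P₂ :=
    (hG.comp (measurable_fst.prodMk (hY₂.comp measurable_snd))).stronglyMeasurable
      |>.integral_prod_right'.measurable
  have hfibers := integral_covariance_slice_le hf hg hf2 hg2 hρ₂ <| by
    filter_upwards [memLp_two_slice hf hf2, memLp_two_slice hg hg2] with x hfx hgx
    exact h₂ (fun a => F (X₁ x, a)) (fun b => G (Y₁ x, b)) (by fun_prop) (by fun_prop) hfx hgx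
  have haverages := h₁ _ _ hF₁ hG₁ (memLp_two_integral_slice hf hf2)
    (memLp_two_integral_slice hg hg2)
  rw [covariance_prod hf hg hf2 hg2, variance_prod hf hf2, variance_prod hg hg2, max_comm]
  exact (add_le_add hfibers haverages).trans (mul_sqrt_add_mul_sqrt_le hρ₂
    (integral_nonneg fun _ => variance_nonneg _ _) (integral_nonneg fun _ => variance_nonneg _ _)
    (variance_nonneg _ _) (variance_nonneg _ _))

lemma MaxCorrLE.pi {α β : Type*} [MeasurableSpace α] [MeasurableSpace β] {μ : Measure (α × β)}
    [IsProbabilityMeasure μ] {ρ : ℝ} (hρ : 0 ≤ ρ) (h : MaxCorrLE μ Prod.fst Prod.snd ρ) (k : ℕ) :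
    MaxCorrLE (Measure.pi fun _ : Fin k => μ) (fun v i => (v i).1) (fun v i => (v i).2) ρ := by
  induction k with
  | zero =>
    intro F G _ _ _ _
    have hconst : (fun v : Fin 0 → α × β => F fun i => (v i).1) = fun _ => F finZeroElim := by
      funext v; congr; funext i; exact i.elim0
    rw [hconst, covariance_const_left]
    positivity
  | succ k ih =>
    have hprod := (MaxCorrLE.prod measurable_fst measurable_snd (by fun_prop) (by fun_prop) hρ h
      ih).comp (MeasurableEquiv.piFinSuccAbove (fun _ => α) 0).symm.measurable
      (MeasurableEquiv.piFinSuccAbove (fun _ => β) 0).symm.measurable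
    have hmp := (measurePreserving_piFinSuccAbove (fun _ : Fin (k + 1) => μ) 0).symm
    rw [← hmp.map_eq, ← max_self ρ]
    refine MaxCorrLE.map hmp.measurable (by fun_prop) (by fun_prop) ?_
    convert hprod using 2 <;> funext i <;> refine Fin.cases ?_ (fun j => ?_) i <;> simp

lemma isProbabilityMeasure_unif {m : ℕ} (hm : 0 < m) : IsProbabilityMeasure (unif m) := by
  constructor
  simp [unif, ENNReal.inv_mul_cancel (Nat.cast_ne_zero.mpr hm.ne') (ENNReal.natCast_ne_top m)]

section Simulation
variable {μ : Measure (ℝ × ℝ)} [IsProbabilityMeasure μ] {k m : ℕ} {f g : (Fin k → ℝ) × Fin m → ℝ}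

lemma measurable_simulation (hf : Measurable f) (hg : Measurable g) :
    Measurable fun ω : (Fin k → ℝ × ℝ) × (Fin m × Fin m) =>
      (f (fun i => (ω.1 i).1, ω.2.1), g (fun i => (ω.1 i).2, ω.2.2)) := by
  fun_prop

lemma isProbabilityMeasure_simLaw (hm : 0 < m) (hf : Measurable f) (hg : Measurable g) :
    IsProbabilityMeasure (simLaw μ k m f g) :=
  have := isProbabilityMeasure_unif hm
  Measure.isProbabilityMeasure_map (measurable_simulation hf hg).aemeasurable

lemma MaxCorrLE.simLaw {ρ : ℝ} (hρ : 0 ≤ ρ) (h : MaxCorrLE μ Prod.fst Prod.snd ρ) (hm : 0 < m)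
    (hf : Measurable f) (hg : Measurable g) :
    MaxCorrLE (simLaw μ k m f g) Prod.fst Prod.snd ρ := by
  have := isProbabilityMeasure_unif hm
  rw [_root_.simLaw, ← max_eq_left hρ]
  refine MaxCorrLE.map (measurable_simulation hf hg) measurable_fst measurable_snd ?_
  exact ((h.pi hρ k).prod (by fun_prop) (by fun_prop) measurable_fst measurable_snd le_rfl
    maxCorrLE_prod_zero).comp hf hg

end Simulation

section MaximalCorrelation
variable {μ : Measure (ℝ × ℝ)}

lemma bddAbove_maxCorr_set : BddAbove ({0} ∪ { r | ∃ φ ψ : ℝ → ℝ, Measurable φ ∧ Measurable ψ ∧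
    (∫ p, φ p.1 ∂μ) = 0 ∧ (∫ p, (φ p.1) ^ 2 ∂μ) = 1 ∧
    (∫ p, ψ p.2 ∂μ) = 0 ∧ (∫ p, (ψ p.2) ^ 2 ∂μ) = 1 ∧
    r = ∫ p, φ p.1 * ψ p.2 ∂μ }) := by
  refine ⟨1, ?_⟩
  rintro r (hr | ⟨φ, ψ, hφ, hψ, -, hφ2, -, hψ2, rfl⟩)
  · rw [hr]; exact zero_le_one
  · simpa [hφ2, hψ2] using integral_mul_le_sqrt_mul_sqrt
      (memLp_two_of_integral_sq_ne_zero (P := μ) (hφ.comp measurable_fst) (by simp [hφ2]))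
      (memLp_two_of_integral_sq_ne_zero (P := μ) (hψ.comp measurable_snd) (by simp [hψ2]))

lemma maxCorr_nonneg : 0 ≤ maxCorr μ :=
  le_csSup bddAbove_maxCorr_set (Or.inl rfl)

variable [IsProbabilityMeasure μ]

lemma covariance_div_le_maxCorr {F G : ℝ → ℝ} (hF : Measurable F) (hG : Measurable G)
    (hFX : MemLp (fun p : ℝ × ℝ => F p.1) 2 μ) (hGY : MemLp (fun p : ℝ × ℝ => G p.2) 2 μ)
    (hσF : √Var[fun p : ℝ × ℝ => F p.1; μ] ≠ 0) (hσG : √Var[fun p : ℝ × ℝ => G p.2; μ] ≠ 0) :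
    cov[fun p => F p.1, fun p => G p.2; μ] /
      (√Var[fun p : ℝ × ℝ => F p.1; μ] * √Var[fun p : ℝ × ℝ => G p.2; μ]) ≤ maxCorr μ := by
  refine le_csSup bddAbove_maxCorr_set (Or.inr ⟨fun x => (F x - ∫ p, F p.1 ∂μ) / √Var[_; μ],
    fun y => (G y - ∫ p, G p.2 ∂μ) / √Var[_; μ], by fun_prop, by fun_prop,
    integral_sub_integral_div (hFX.integrable one_le_two) _,
    integral_sq_sub_integral_div_sqrt_variance hFX.aemeasurable hσF,
    integral_sub_integral_div (hGY.integrable one_le_two) _,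
    integral_sq_sub_integral_div_sqrt_variance hGY.aemeasurable hσG, ?_⟩)
  simp only [div_mul_div_comm, integral_div]
  rfl

lemma maxCorrLE_maxCorr : MaxCorrLE μ Prod.fst Prod.snd (maxCorr μ) := by
  intro F G hF hG hFX hGY
  have hcs := covariance_le_sqrt_variance_mul_sqrt_variance hFX hGY
  rcases (mul_nonneg (Real.sqrt_nonneg _) (Real.sqrt_nonneg _)).eq_or_lt with hσ | hσ
  · rw [← hσ] at hcs ⊢
    simpa using hcs
  · rw [← div_le_iff₀ hσ]
    exact covariance_div_le_maxCorr hF hG hFX hGY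
      (pos_of_mul_pos_left hσ (Real.sqrt_nonneg _)).ne'
      (pos_of_mul_pos_right hσ (Real.sqrt_nonneg _)).ne'

lemma maxCorr_le_of_maxCorrLE {ρ : ℝ} (hρ : 0 ≤ ρ) (h : MaxCorrLE μ Prod.fst Prod.snd ρ) :
    maxCorr μ ≤ ρ := by
  refine csSup_le ⟨0, Or.inl rfl⟩ ?_
  rintro r (hr | ⟨φ, ψ, hφ, hψ, hφ1, hφ2, hψ1, hψ2, rfl⟩)
  · rwa [hr]
  have hφL2 : MemLp (fun p : ℝ × ℝ => φ p.1) 2 μ :=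
    memLp_two_of_integral_sq_ne_zero (by fun_prop) (by simp [hφ2])
  have hψL2 : MemLp (fun p : ℝ × ℝ => ψ p.2) 2 μ :=
    memLp_two_of_integral_sq_ne_zero (by fun_prop) (by simp [hψ2])
  have hcov := h φ ψ hφ hψ hφL2 hψL2
  rw [covariance_eq_sub hφL2 hψL2, variance_eq_sub hφL2, variance_eq_sub hψL2] at hcov
  simpa [hφ1, hφ2, hψ1, hψ2] using hcov

end MaximalCorrelation

section Clipping

def clip (M : ℕ) (x : ℝ) : ℝ := max (-M) (min (M : ℝ) x)

lemma continuous_clip (M : ℕ) : Continuous (clip M) := by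
  unfold clip; fun_prop

lemma abs_clip_le (M : ℕ) (x : ℝ) : |clip M x| ≤ M :=
  abs_le.mpr ⟨le_max_left _ _, max_le (by linarith [M.cast_nonneg (α := ℝ)]) (min_le_left _ _)⟩

lemma abs_clip_le_abs (M : ℕ) (x : ℝ) : |clip M x| ≤ |x| := by
  have := M.cast_nonneg (α := ℝ)
  rw [clip, abs_le]
  constructor
  · exact (le_min (by linarith [abs_nonneg x]) (neg_abs_le x)).trans (le_max_right _ _)
  · exact max_le (by linarith [abs_nonneg x]) ((min_le_right _ _).trans (le_abs_self x))

lemma tendsto_clip (x : ℝ) : Tendsto (fun M : ℕ => clip M x) atTop (𝓝 x) := by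
  refine tendsto_const_nhds.congr' ?_
  filter_upwards [eventually_ge_atTop ⌈|x|⌉₊] with M hM
  have hx : |x| ≤ M := (Nat.le_ceil _).trans (by exact_mod_cast hM)
  rw [clip, min_eq_right ((le_abs_self x).trans hx), max_eq_right (by linarith [neg_abs_le x])]

variable {Ω : Type*} [MeasurableSpace Ω] {P : Measure Ω} {f g : Ω → ℝ}

lemma tendsto_integral_clip (hf : Integrable f P) :
    Tendsto (fun M : ℕ => ∫ ω, clip M (f ω) ∂P) atTop (𝓝 (∫ ω, f ω ∂P)) :=
  tendsto_integral_of_dominated_convergence (fun ω => |f ω|)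
    (fun M => (continuous_clip M).comp_aestronglyMeasurable hf.1) hf.abs
    (fun M => ae_of_all _ fun ω => abs_clip_le_abs M (f ω))
    (ae_of_all _ fun ω => tendsto_clip (f ω))

lemma tendsto_integral_clip_mul_clip (hf : AEStronglyMeasurable f P)
    (hg : AEStronglyMeasurable g P) (hfg : Integrable (fun ω => f ω * g ω) P) :
    Tendsto (fun M : ℕ => ∫ ω, clip M (f ω) * clip M (g ω) ∂P) atTop
      (𝓝 (∫ ω, f ω * g ω ∂P)) :=
  tendsto_integral_of_dominated_convergence (fun ω => |f ω * g ω|)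
    (fun M => ((continuous_clip M).comp_aestronglyMeasurable hf).mul
      ((continuous_clip M).comp_aestronglyMeasurable hg)) hfg.abs
    (fun M => ae_of_all _ fun ω => by
      rw [Real.norm_eq_abs, abs_mul, abs_mul]
      exact mul_le_mul (abs_clip_le_abs M _) (abs_clip_le_abs M _) (abs_nonneg _) (abs_nonneg _))
    (ae_of_all _ fun ω => (tendsto_clip (f ω)).mul (tendsto_clip (g ω)))

lemma tendsto_covariance_clip [IsProbabilityMeasure P] (hf : MemLp f 2 P) (hg : MemLp g 2 P) :
    Tendsto (fun M : ℕ => cov[fun ω => clip M (f ω), fun ω => clip M (g ω); P]) atTop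
      (𝓝 cov[f, g; P]) := by
  have hclip (M : ℕ) {h : Ω → ℝ} (hh : MemLp h 2 P) : MemLp (fun ω => clip M (h ω)) 2 P :=
    .of_bound ((continuous_clip M).comp_aestronglyMeasurable hh.1) M
      (ae_of_all _ fun ω => abs_clip_le M (h ω))
  simp only [covariance_eq_sub (hclip _ hf) (hclip _ hg), covariance_eq_sub hf hg, Pi.mul_apply]
  exact (tendsto_integral_clip_mul_clip hf.1 hg.1 (hf.integrable_mul hg)).sub
    ((tendsto_integral_clip (hf.integrable one_le_two)).mul
      (tendsto_integral_clip (hg.integrable one_le_two)))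

end Clipping

lemma MaxCorrLE.of_forall_bounded {Ω α β : Type*} [MeasurableSpace Ω] [MeasurableSpace α]
    [MeasurableSpace β] {P : Measure Ω} [IsProbabilityMeasure P] {X : Ω → α} {Y : Ω → β} {ρ : ℝ}
    (h : ∀ F : α → ℝ, ∀ G : β → ℝ, Measurable F → Measurable G → ∀ C : ℝ,
      (∀ a, |F a| ≤ C) → (∀ b, |G b| ≤ C) →
      cov[fun ω => F (X ω), fun ω => G (Y ω); P] ≤
        ρ * (√Var[fun ω => F (X ω); P] * √Var[fun ω => G (Y ω); P])) :
    MaxCorrLE P X Y ρ := by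
  intro F G hF hG hf hg
  rw [← covariance_self hf.aemeasurable, ← covariance_self hg.aemeasurable]
  refine le_of_tendsto_of_tendsto' (tendsto_covariance_clip hf hg)
    ((((tendsto_covariance_clip hf hf).sqrt).mul (tendsto_covariance_clip hg hg).sqrt).const_mul ρ)
    fun M => ?_
  have hclip := (continuous_clip M).measurable
  rw [covariance_self (X := fun ω => clip M (F (X ω))) (hclip.comp_aemeasurable hf.aemeasurable),
    covariance_self (X := fun ω => clip M (G (Y ω))) (hclip.comp_aemeasurable hg.aemeasurable)]
  exact h (fun a => clip M (F a)) (fun b => clip M (G b)) (hclip.comp hF) (hclip.comp hG) M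
    (fun _ => abs_clip_le M _) (fun _ => abs_clip_le M _)

section TotalVariation
variable {μ ν : Measure (ℝ × ℝ)} [IsProbabilityMeasure μ] [IsProbabilityMeasure ν]

lemma abs_measureReal_sub_le_dTV {D : Set (ℝ × ℝ)} (hD : MeasurableSet D) :
    |μ.real D - ν.real D| ≤ dTV μ ν := by
  refine le_ciSup (f := fun D : { D : Set (ℝ × ℝ) // MeasurableSet D } =>
    |(μ D.1).toReal - (ν D.1).toReal|) ⟨1, ?_⟩ ⟨D, hD⟩
  rintro _ ⟨E, rfl⟩
  exact abs_sub_le_of_nonneg_of_le measureReal_nonneg measureReal_le_one measureReal_nonneg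
    measureReal_le_one

lemma integral_abs_sub_rnDeriv_le_two_mul_dTV :
    ∫ x, |(μ.rnDeriv (μ + ν) x).toReal - (ν.rnDeriv (μ + ν) x).toReal| ∂(μ + ν) ≤
      2 * dTV μ ν := by
  set p := fun x => (μ.rnDeriv (μ + ν) x).toReal
  set q := fun x => (ν.rnDeriv (μ + ν) x).toReal
  have hμ : μ ≪ μ + ν := Measure.absolutelyContinuous_of_le (Measure.le_add_right le_rfl)
  have hν : ν ≪ μ + ν := Measure.absolutelyContinuous_of_le (Measure.le_add_left le_rfl)
  have hp : Integrable p (μ + ν) := Measure.integrable_toReal_rnDeriv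
  have hq : Integrable q (μ + ν) := Measure.integrable_toReal_rnDeriv
  show ∫ x, |p x - q x| ∂(μ + ν) ≤ 2 * dTV μ ν
  set A := {x | q x ≤ p x}
  have hA : MeasurableSet A :=
    measurableSet_le (Measure.measurable_rnDeriv _ _).ennreal_toReal
      (Measure.measurable_rnDeriv _ _).ennreal_toReal
  have hOnA : ∫ x in A, |p x - q x| ∂(μ + ν) = μ.real A - ν.real A := by
    rw [setIntegral_congr_fun hA fun x hx => abs_of_nonneg (sub_nonneg.mpr hx),
      integral_sub hp.integrableOn hq.integrableOn, Measure.setIntegral_toReal_rnDeriv hμ,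
      Measure.setIntegral_toReal_rnDeriv hν]
  have hOnAc : ∫ x in Aᶜ, |p x - q x| ∂(μ + ν) = ν.real Aᶜ - μ.real Aᶜ := by
    rw [setIntegral_congr_fun hA.compl fun x hx =>
        abs_of_neg (sub_neg.mpr (not_le.mp (Set.notMem_ofPred_iff.mp hx))), integral_neg,
      integral_sub hp.integrableOn hq.integrableOn, Measure.setIntegral_toReal_rnDeriv hμ, Measure.setIntegral_toReal_rnDeriv hν, neg_sub]
  have hpq : Integrable (fun x => |p x - q x|) (μ + ν) := (hp.sub hq).abs
  rw [← integral_add_compl hA hpq, hOnA, hOnAc, two_mul]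
  exact add_le_add (le_of_abs_le (abs_measureReal_sub_le_dTV hA))
    (le_of_abs_le (abs_sub_comm (μ.real Aᶜ) _ ▸ abs_measureReal_sub_le_dTV hA.compl))

lemma abs_integral_sub_integral_le_dTV {h : ℝ × ℝ → ℝ} (hm : Measurable h) {C : ℝ}
    (hC : ∀ x, |h x| ≤ C) :
    |∫ x, h x ∂μ - ∫ x, h x ∂ν| ≤ 2 * C * dTV μ ν := by
  have hμ : μ ≪ μ + ν := Measure.absolutelyContinuous_of_le (Measure.le_add_right le_rfl)
  have hν : ν ≪ μ + ν := Measure.absolutelyContinuous_of_le (Measure.le_add_left le_rfl)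
  have hp : Integrable (fun x => (μ.rnDeriv (μ + ν) x).toReal) (μ + ν) :=
    Measure.integrable_toReal_rnDeriv
  have hq : Integrable (fun x => (ν.rnDeriv (μ + ν) x).toReal) (μ + ν) :=
    Measure.integrable_toReal_rnDeriv
  have hhC : ∀ᵐ x ∂(μ + ν), ‖h x‖ ≤ C := ae_of_all _ hC
  have : μ.HaveLebesgueDecomposition (μ + ν) := Measure.haveLebesgueDecomposition_of_finiteMeasure
  have : ν.HaveLebesgueDecomposition (μ + ν) := Measure.haveLebesgueDecomposition_of_finiteMeasure
  rw [← integral_rnDeriv_smul hμ, ← integral_rnDeriv_smul hν]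
  simp only [smul_eq_mul]
  rw [← integral_sub
    (hp.mul_bdd hm.aestronglyMeasurable hhC) (hq.mul_bdd hm.aestronglyMeasurable hhC),
    ← Real.norm_eq_abs]
  calc _ ≤ ∫ x, |(μ.rnDeriv (μ + ν) x).toReal - (ν.rnDeriv (μ + ν) x).toReal| * C ∂(μ + ν) := by
        refine norm_integral_le_of_norm_le ((hp.sub hq).abs.mul_const C) (ae_of_all _ fun x => ?_)
        rw [← sub_mul, norm_mul, Real.norm_eq_abs]
        exact mul_le_mul_of_nonneg_left (hC x) (abs_nonneg _)
    _ ≤ 2 * dTV μ ν * C := by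
        rw [integral_mul_const]
        exact mul_le_mul_of_nonneg_right integral_abs_sub_rnDeriv_le_two_mul_dTV
          ((abs_nonneg _).trans (hC 0))
    _ = 2 * C * dTV μ ν := by ring

end TotalVariation

section Limit
variable {ν : Measure (ℝ × ℝ)} [IsProbabilityMeasure ν] {σ : ℕ → Measure (ℝ × ℝ)}

lemma tendsto_integral_of_tendsto_dTV (hσ : ∀ n, IsProbabilityMeasure (σ n))
    (htv : Tendsto (fun n => dTV ν (σ n)) atTop (𝓝 0)) {h : ℝ × ℝ → ℝ} (hm : Measurable h)
    {C : ℝ} (hC : ∀ x, |h x| ≤ C) :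
    Tendsto (fun n => ∫ x, h x ∂σ n) atTop (𝓝 (∫ x, h x ∂ν)) := by
  rw [tendsto_iff_norm_sub_tendsto_zero]
  refine squeeze_zero (fun _ => norm_nonneg _) (fun n => ?_) (by simpa using htv.const_mul (2 * C))
  rw [Real.norm_eq_abs, abs_sub_comm]
  exact abs_integral_sub_integral_le_dTV (μ := ν) (ν := σ n) hm hC

lemma tendsto_covariance_of_tendsto_dTV (hσ : ∀ n, IsProbabilityMeasure (σ n))
    (htv : Tendsto (fun n => dTV ν (σ n)) atTop (𝓝 0)) {f g : ℝ × ℝ → ℝ} (hf : Measurable f)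
    (hg : Measurable g) {C : ℝ} (hfC : ∀ x, |f x| ≤ C) (hgC : ∀ x, |g x| ≤ C) :
    Tendsto (fun n => cov[f, g; σ n]) atTop (𝓝 cov[f, g; ν]) := by
  have hfgC (x : ℝ × ℝ) : |f x * g x| ≤ C * C := by
    rw [abs_mul]
    exact mul_le_mul (hfC x) (hgC x) (abs_nonneg _) ((abs_nonneg _).trans (hfC x))
  have hcov (μ : Measure (ℝ × ℝ)) [IsProbabilityMeasure μ] :
      cov[f, g; μ] = ∫ x, f x * g x ∂μ - (∫ x, f x ∂μ) * ∫ x, g x ∂μ :=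
    covariance_eq_sub (.of_bound hf.aestronglyMeasurable C (ae_of_all _ hfC))
      (.of_bound hg.aestronglyMeasurable C (ae_of_all _ hgC))
  simp only [hcov]
  exact (tendsto_integral_of_tendsto_dTV hσ htv (hf.mul hg) hfgC).sub
    ((tendsto_integral_of_tendsto_dTV hσ htv hf hfC).mul
      (tendsto_integral_of_tendsto_dTV hσ htv hg hgC))

lemma MaxCorrLE.of_tendsto_dTV (hσ : ∀ n, IsProbabilityMeasure (σ n)) {ρ : ℝ}
    (h : ∀ n, MaxCorrLE (σ n) Prod.fst Prod.snd ρ)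
    (htv : Tendsto (fun n => dTV ν (σ n)) atTop (𝓝 0)) :
    MaxCorrLE ν Prod.fst Prod.snd ρ := by
  refine MaxCorrLE.of_forall_bounded fun F G hF hG C hFC hGC => ?_
  have hf : Measurable fun p : ℝ × ℝ => F p.1 := hF.comp measurable_fst
  have hg : Measurable fun p : ℝ × ℝ => G p.2 := hG.comp measurable_snd
  have hfC (p : ℝ × ℝ) : |F p.1| ≤ C := hFC p.1
  have hgC (p : ℝ × ℝ) : |G p.2| ≤ C := hGC p.2
  rw [← covariance_self hf.aemeasurable, ← covariance_self hg.aemeasurable]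
  refine le_of_tendsto_of_tendsto' (tendsto_covariance_of_tendsto_dTV hσ htv hf hg hfC hgC)
    ((((tendsto_covariance_of_tendsto_dTV hσ htv hf hf hfC hfC).sqrt).mul
      (tendsto_covariance_of_tendsto_dTV hσ htv hg hg hgC hgC).sqrt).const_mul ρ) fun n => ?_
  rw [covariance_self hf.aemeasurable, covariance_self hg.aemeasurable]
  exact h n F G hF hG (.of_bound hf.aestronglyMeasurable C (ae_of_all _ hfC))
    (.of_bound hg.aestronglyMeasurable C (ae_of_all _ hgC))

end Limit

theorem simulation_cannot_increase_maximal_correlation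
    (μ ν : Measure (ℝ × ℝ)) (hμ : IsProbabilityMeasure μ) (hν : IsProbabilityMeasure ν)
    (h : CanSimulate μ ν) :
    maxCorr ν ≤ maxCorr μ := by
  obtain ⟨k, m, f, g, hsim, htv⟩ := h
  choose _ hm hf hg using hsim
  exact maxCorr_le_of_maxCorrLE maxCorr_nonneg
    (.of_tendsto_dTV (fun n => isProbabilityMeasure_simLaw (hm n) (hf n) (hg n))
      (fun n => maxCorrLE_maxCorr.simLaw maxCorr_nonneg (hm n) (hf n) (hg n)) htv)
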